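/- arXiv:2508.01964 — 9 statements merged into one kernel-verified Lean document; each statement's English description precedes it below -/
import Mathlib

section
/- Let K be a positive semidefinite bounded linear operator on H and let (F,G) be an (N,n) K-dual pair. Then max_{1≤i≤N} ‖f_i‖·‖g_i‖ ≥ tr(K)/N. -/
/-! Writing `K` as the sum of the rank-one maps `f ↦ ⟨f, g_i⟩ f_i` gives
`tr K = ∑ ⟨f_i, g_i⟩`, and Cauchy–Schwarz bounds each of the `N` terms by `‖f_i‖ ‖g_i‖`. -/

open scoped ComplexOrder

local notation "⟪" x ", " y "⟫" => @inner ℂ _ _ x y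

open InnerProductSpace in
theorem LinearMap.trace_eq_sum_inner_of_apply_eq_sum
    {𝕜 E ι : Type*} [RCLike 𝕜] [NormedAddCommGroup E] [InnerProductSpace 𝕜 E]
    [FiniteDimensional 𝕜 E] [Fintype ι] {T : E →ₗ[𝕜] E} {F G : ι → E}
    (hT : ∀ x, T x = ∑ i, inner 𝕜 (G i) x • F i) :
    T.trace 𝕜 E = ∑ i, inner 𝕜 (G i) (F i) := by
  have hT_eq : T = ∑ i, (rankOne 𝕜 (F i) (G i) : E →ₗ[𝕜] E) := by
    ext x
    simp [hT, rankOne_apply]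
  simp [hT_eq, map_sum, trace_rankOne]

theorem sum_re_inner_le_card_mul_iSup
    {𝕜 E ι : Type*} [RCLike 𝕜] [NormedAddCommGroup E] [InnerProductSpace 𝕜 E]
    [Fintype ι] (F G : ι → E) :
    ∑ i, RCLike.re (inner 𝕜 (G i) (F i)) ≤ Fintype.card ι * ⨆ i, ‖F i‖ * ‖G i‖ := by
  have hbdd : BddAbove (Set.range fun i => ‖F i‖ * ‖G i‖) := (Set.finite_range _).bddAbove
  rw [← nsmul_eq_mul]
  refine Finset.sum_le_card_nsmul _ _ _ fun i _ => ?_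
  calc RCLike.re (inner 𝕜 (G i) (F i)) ≤ ‖G i‖ * ‖F i‖ := re_inner_le_norm _ _
    _ = ‖F i‖ * ‖G i‖ := mul_comm _ _
    _ ≤ ⨆ i, ‖F i‖ * ‖G i‖ := le_ciSup hbdd i

theorem stmt0_general
    {H : Type*} [NormedAddCommGroup H] [InnerProductSpace ℂ H] [FiniteDimensional ℂ H]
    {N : ℕ}
    (K : H →L[ℂ] H)
    (F G : Fin N → H)
    (hdual : ∀ f : H, K f = ∑ i, ⟪G i, f⟫ • F i) :
    (LinearMap.trace ℂ H (K : H →ₗ[ℂ] H)).re / N ≤ ⨆ i, ‖F i‖ * ‖G i‖ := by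
  refine div_le_of_le_mul₀ N.cast_nonneg (Real.iSup_nonneg fun i => by positivity) ?_
  rw [LinearMap.trace_eq_sum_inner_of_apply_eq_sum hdual, Complex.re_sum, mul_comm]
  simpa using sum_re_inner_le_card_mul_iSup (𝕜 := ℂ) F G

/-- For a positive semidefinite bounded operator `K` on a finite-dimensional
complex inner product space `H` and an `(N, n)` `K`-dual pair `(F, G)`
(the paper's inner product `⟨f, g⟩` is linear in the first slot, i.e. it is Mathlib's `⟪g, f⟫`),
`max_{1 ≤ i ≤ N} ‖f_i‖ · ‖g_i‖ ≥ tr(K) / N`. -/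
theorem stmt0
    {H : Type*} [NormedAddCommGroup H] [InnerProductSpace ℂ H] [FiniteDimensional ℂ H]
    (hdim : 1 ≤ Module.finrank ℂ H)
    {N : ℕ} (hN : 1 ≤ N)
    (K : H →L[ℂ] H) (hK : ∀ f : H, 0 ≤ ⟪K f, f⟫)
    (F G : Fin N → H)
    (hdual : ∀ f : H, K f = ∑ i, ⟪G i, f⟫ • F i) :
    (LinearMap.trace ℂ H (K : H →ₗ[ℂ] H)).re / N ≤ ⨆ i, ‖F i‖ * ‖G i‖ :=
  stmt0_general K F G hdual
end

section
/- Let K be a positive semidefinite bounded linear operator on H and let (F,G) be an (N,n) K-dual pair. Then max_{1≤i≤N} ‖f_i‖·‖g_i‖ = tr(K)/N if and only if ‖f_i‖·‖g_i‖ = tr(K)/N for every i ∈ {1,…,N}. -/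
open scoped ComplexOrder

local notation "⟪" x ", " y "⟫" => @inner ℂ _ _ x y

theorem stmt1_trace_eq {H : Type*} [NormedAddCommGroup H] [InnerProductSpace ℂ H]
    [FiniteDimensional ℂ H]
    {N : ℕ} (K : H →L[ℂ] H) (F G : Fin N → H)
    (hdual : ∀ f : H, K f = ∑ i, ⟪G i, f⟫ • F i) :
    LinearMap.trace ℂ H (K : H →ₗ[ℂ] H) = ∑ i, ⟪G i, F i⟫ := by
  let b := stdOrthonormalBasis ℂ H
  rw [LinearMap.trace_eq_matrix_trace ℂ b.toBasis, Matrix.trace]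
  have h1 : ∀ j, (LinearMap.toMatrix b.toBasis b.toBasis (K : H →ₗ[ℂ] H)).diag j
      = ⟪b j, K (b j)⟫ := by
    intro j
    rw [Matrix.diag, LinearMap.toMatrix_apply, b.coe_toBasis_repr_apply,
      b.repr_apply_apply]
    simp
  simp_rw [h1, hdual, inner_sum, inner_smul_right]
  rw [Finset.sum_comm]
  exact Finset.sum_congr rfl fun i _ => b.sum_inner_mul_inner (G i) (F i)

/-- For a positive semidefinite bounded operator `K` on a finite-dimensional
complex inner product space `H` and an `(N, n)` `K`-dual pair `(F, G)`
(the paper's inner product `⟨f, g⟩` is linear in the first slot, i.e. it is Mathlib's `⟪g, f⟫`),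
`max_{1 ≤ i ≤ N} ‖f_i‖·‖g_i‖ = tr(K)/N` iff `‖f_i‖·‖g_i‖ = tr(K)/N` for every `i`. -/
theorem stmt1
    {H : Type*} [NormedAddCommGroup H] [InnerProductSpace ℂ H] [FiniteDimensional ℂ H]
    (hdim : 1 ≤ Module.finrank ℂ H)
    {N : ℕ} (hN : 1 ≤ N)
    (K : H →L[ℂ] H) (hK : ∀ f : H, 0 ≤ ⟪K f, f⟫)
    (F G : Fin N → H)
    (hdual : ∀ f : H, K f = ∑ i, ⟪G i, f⟫ • F i) :
    (⨆ i, ‖F i‖ * ‖G i‖) = (LinearMap.trace ℂ H (K : H →ₗ[ℂ] H)).re / N ↔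
      ∀ i, ‖F i‖ * ‖G i‖ = (LinearMap.trace ℂ H (K : H →ₗ[ℂ] H)).re / N := by
  haveI : Nonempty (Fin N) := Fin.pos_iff_nonempty.mp (Nat.lt_of_lt_of_le zero_lt_one hN)
  set t : ℝ := (LinearMap.trace ℂ H (K : H →ₗ[ℂ] H)).re with ht
  set a : Fin N → ℝ := fun i => ‖F i‖ * ‖G i‖ with ha
  have hNpos : (0:ℝ) < N := by exact_mod_cast Nat.lt_of_lt_of_le zero_lt_one hN
  have hsum : t ≤ ∑ i, a i := by
    rw [ht, stmt1_trace_eq K F G hdual, Complex.re_sum]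
    refine Finset.sum_le_sum fun i _ => ?_
    calc (⟪G i, F i⟫).re ≤ ‖⟪G i, F i⟫‖ := Complex.re_le_norm _
      _ ≤ ‖G i‖ * ‖F i‖ := norm_inner_le_norm _ _
      _ = a i := mul_comm _ _
  constructor
  · intro h i
    have hle : ∀ j, a j ≤ t / N := fun j =>
      h ▸ le_ciSup (Set.Finite.bddAbove (Set.finite_range a)) j
    have hsum2 : ∑ j, a j ≤ ∑ _j : Fin N, t / N := Finset.sum_le_sum fun j _ => hle j
    have hconst : ∑ _j : Fin N, t / N = t := by
      rw [Finset.sum_const, Finset.card_univ, Fintype.card_fin, nsmul_eq_mul,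
        mul_div_cancel₀ _ (ne_of_gt hNpos)]
    have heq : ∑ j, a j = ∑ _j : Fin N, t / N := le_antisymm hsum2 (by rw [hconst]; exact hsum)
    exact ((Finset.sum_eq_sum_iff_of_le fun j _ => hle j).mp heq i (Finset.mem_univ i))
  · intro h
    have : a = fun _ => t / N := funext h
    rw [show (⨆ i, a i) = ⨆ _i : Fin N, t / N by rw [this]]
    exact ciSup_const
end

section
/- Let K be a positive semidefinite bounded linear operator on H and let N ≥ n. Then there exists a family F = (f_1,…,f_N) of vectors of H such that K f = ∑_{i=1}^N ⟨f, f_i⟩ f_i for all f ∈ H (so that F is a K-dual of itself) and ‖f_i‖² = tr(K)/N for every i ∈ {1,…,N}; in particular, the (N,n) K-dual pair (F,F) satisfies max_{1≤i≤N} ‖f_i‖·‖f_i‖ = tr(K)/N. -/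
open scoped ComplexOrder

local notation "⟪" x ", " y "⟫" => @inner ℂ _ _ x y

/-- For a positive semidefinite bounded operator `K` on a finite-dimensional
complex inner product space `H` of dimension `n` and any `N ≥ n`, there exists a family
`F = (f_1, …, f_N)` which is a `K`-dual of itself with `‖f_i‖² = tr(K)/N` for all `i`;
in particular `max_i ‖f_i‖·‖f_i‖ = tr(K)/N`.
(The paper's inner product `⟨f, g⟩` is linear in the first slot, i.e. Mathlib's `⟪g, f⟫`.) -/
theorem stmt2
    {H : Type*} [NormedAddCommGroup H] [InnerProductSpace ℂ H] [FiniteDimensional ℂ H]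
    (hdim : 1 ≤ Module.finrank ℂ H)
    {N : ℕ} (hN : Module.finrank ℂ H ≤ N)
    (K : H →L[ℂ] H) (hK : ∀ f : H, 0 ≤ ⟪K f, f⟫) :
    ∃ F : Fin N → H,
      (∀ f : H, K f = ∑ i, ⟪F i, f⟫ • F i) ∧
      (∀ i, ‖F i‖ ^ 2 = (LinearMap.trace ℂ H (K : H →ₗ[ℂ] H)).re / N) ∧
      (⨆ i, ‖F i‖ * ‖F i‖) = (LinearMap.trace ℂ H (K : H →ₗ[ℂ] H)).re / N := by
  classical
  have hNpos : 0 < N := lt_of_lt_of_le hdim hN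
  have hNR : (0:ℝ) < N := by exact_mod_cast hNpos
  -- symmetry of K
  have hSymm : (K : H →ₗ[ℂ] H).IsSymmetric := by
    rw [LinearMap.isSymmetric_iff_inner_map_self_real]
    intro v
    have h := hK v
    rw [Complex.le_def] at h
    have h2 : (⟪K v, v⟫).im = 0 := by simpa using h.2.symm
    exact Complex.conj_eq_iff_im.2 h2
  set n := Module.finrank ℂ H with hn
  let e : OrthonormalBasis (Fin n) ℂ H := hSymm.eigenvectorBasis rfl
  let μ : Fin n → ℝ := hSymm.eigenvalues rfl
  have heig : ∀ j, K (e j) = (μ j : ℂ) • e j := fun j => hSymm.apply_eigenvectorBasis rfl j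
  have hμ : ∀ j, 0 ≤ μ j := by
    intro j
    have h := hK (e j)
    have hval : ⟪K (e j), e j⟫ = (μ j : ℂ) := by
      rw [heig j, inner_smul_left]
      simp [inner_self_eq_norm_sq_to_K, e.orthonormal.1 j, Complex.conj_ofReal]
    rw [hval] at h
    exact_mod_cast h
  have htr : (LinearMap.trace ℂ H (K : H →ₗ[ℂ] H)).re = ∑ j, μ j := by
    rw [LinearMap.trace_eq_matrix_trace ℂ e.toBasis]
    have hd : ∀ j, (LinearMap.toMatrix e.toBasis e.toBasis (K : H →ₗ[ℂ] H)) j j = (μ j : ℂ) := by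
      intro j
      rw [LinearMap.toMatrix_apply, OrthonormalBasis.coe_toBasis]
      rw [show (K : H →ₗ[ℂ] H) (e j) = (μ j : ℂ) • e j from heig j, map_smul,
        ← OrthonormalBasis.coe_toBasis (hSymm.eigenvectorBasis rfl), Module.Basis.repr_self]
      simp
    rw [Matrix.trace]
    simp only [Matrix.diag, hd]
    rw [← Complex.ofReal_sum]
    exact Complex.ofReal_re _
  -- primitive N-th root of unity
  set ζ : ℂ := Complex.exp (2 * Real.pi * Complex.I / N) with hζdef
  have hζ : IsPrimitiveRoot ζ N := Complex.isPrimitiveRoot_exp N hNpos.ne'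
  have hζne : ζ ≠ 0 := Complex.exp_ne_zero _
  have hconj : (starRingEnd ℂ) ζ = ζ⁻¹ := by
    rw [hζdef, ← Complex.exp_conj, ← Complex.exp_neg]
    congr 1
    simp [map_div₀, Complex.conj_I, map_ofNat]
    ring
  -- orthogonality sums
  have hsum : ∀ j k : Fin n,
      ∑ i : Fin N, (starRingEnd ℂ) (ζ ^ ((i:ℕ)*(j:ℕ))) * ζ ^ ((i:ℕ)*(k:ℕ))
        = if j = k then (N : ℂ) else 0 := by
    intro j k
    have key : ∀ i : Fin N, (starRingEnd ℂ) (ζ ^ ((i:ℕ)*(j:ℕ))) * ζ ^ ((i:ℕ)*(k:ℕ))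
        = (ζ ^ ((k:ℤ) - (j:ℤ))) ^ (i:ℕ) := by
      intro i
      rw [map_pow, hconj, ← zpow_natCast ζ ((i:ℕ)*(k:ℕ)),
        ← zpow_natCast ζ⁻¹ ((i:ℕ)*(j:ℕ)), inv_zpow, ← zpow_neg, ← zpow_add₀ hζne,
        ← zpow_natCast (ζ ^ ((k:ℤ)-(j:ℤ))) (i:ℕ), ← zpow_mul]
      congr 1
      push_cast
      ring
    rw [Finset.sum_congr rfl (fun i _ => key i)]
    by_cases hjk : j = k
    · subst hjk
      simp
    · rw [if_neg hjk, Fin.sum_univ_eq_sum_range (fun i => (ζ ^ ((k:ℤ)-(j:ℤ)))^i) N]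
      have hx1 : ζ ^ ((k:ℤ)-(j:ℤ)) ≠ 1 := by
        intro h
        have hd := (hζ.zpow_eq_one_iff_dvd _).mp h
        have h0 : (k:ℤ) - (j:ℤ) = 0 := by
          refine Int.eq_zero_of_abs_lt_dvd hd ?_
          have hj : (j:ℕ) < N := lt_of_lt_of_le j.2 hN
          have hk : (k:ℕ) < N := lt_of_lt_of_le k.2 hN
          rw [abs_lt]
          omega
        exact hjk (by ext; omega)
      have hxN : (ζ ^ ((k:ℤ)-(j:ℤ))) ^ N = 1 := by
        rw [← zpow_natCast (ζ ^ ((k:ℤ)-(j:ℤ))) N, ← zpow_mul, mul_comm, zpow_mul,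
          zpow_natCast, hζ.pow_eq_one, one_zpow]
      rw [geom_sum_eq hx1, hxN]
      simp
  -- coefficients and the frame vectors
  set a : Fin n → ℝ := fun j => Real.sqrt (μ j) / Real.sqrt N with ha
  have haa : ∀ j, a j * a j * N = μ j := by
    intro j
    rw [ha]
    simp only [div_mul_div_comm, Real.mul_self_sqrt (hμ j), Real.mul_self_sqrt hNR.le]
    field_simp
  set c : Fin N → Fin n → ℂ := fun i j => (a j : ℂ) * ζ ^ ((i:ℕ)*(j:ℕ)) with hc
  have csum : ∀ j k : Fin n, ∑ i : Fin N, (starRingEnd ℂ) (c i j) * c i k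
      = if j = k then (μ j : ℂ) else 0 := by
    intro j k
    have hterm : ∀ i : Fin N, (starRingEnd ℂ) (c i j) * c i k
        = ((a j : ℂ) * (a k : ℂ)) *
          ((starRingEnd ℂ) (ζ ^ ((i:ℕ)*(j:ℕ))) * ζ ^ ((i:ℕ)*(k:ℕ))) := by
      intro i
      rw [hc]
      simp only [map_mul, Complex.conj_ofReal]
      ring
    rw [Finset.sum_congr rfl (fun i _ => hterm i), ← Finset.mul_sum, hsum j k]
    by_cases hjk : j = k
    · subst hjk
      rw [if_pos rfl, if_pos rfl]
      rw [← haa j]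
      push_cast
      ring
    · simp [hjk]
  have hcc : ∀ (i : Fin N) (j : Fin n),
      (starRingEnd ℂ) (c i j) * c i j = ((μ j / N : ℝ) : ℂ) := by
    intro i j
    rw [hc]
    simp only [map_mul, Complex.conj_ofReal, map_pow, hconj]
    rw [show (a j : ℂ) * (ζ⁻¹) ^ ((i:ℕ)*(j:ℕ)) * ((a j : ℂ) * ζ ^ ((i:ℕ)*(j:ℕ)))
        = ((a j : ℂ) * (a j : ℂ)) * ((ζ ^ ((i:ℕ)*(j:ℕ)))⁻¹ * ζ ^ ((i:ℕ)*(j:ℕ))) by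
          rw [inv_pow]; ring]
    rw [inv_mul_cancel₀ (pow_ne_zero _ hζne), mul_one]
    have := haa j
    push_cast
    rw [eq_div_iff (by exact_mod_cast hNR.ne')]
    exact_mod_cast congrArg (Complex.ofReal) this
  refine ⟨fun i => ∑ j, c i j • e j, ?_, ?_, ?_⟩
  · -- frame identity
    intro f
    have hinner : ∀ i : Fin N, ⟪∑ j, c i j • e j, f⟫
        = ∑ j, (starRingEnd ℂ) (c i j) * ⟪e j, f⟫ := by
      intro i
      rw [sum_inner]
      exact Finset.sum_congr rfl fun j _ => inner_smul_left _ _ _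
    calc K f = K (∑ k, ⟪e k, f⟫ • e k) := by rw [e.sum_repr']
    _ = ∑ k, ((μ k : ℂ) * ⟪e k, f⟫) • e k := by
        rw [map_sum]
        refine Finset.sum_congr rfl fun k _ => ?_
        rw [map_smul, heig k, smul_smul, mul_comm]
    _ = ∑ k, (∑ j, ((if j = k then (μ j : ℂ) else 0) * ⟪e j, f⟫)) • e k := by
        refine Finset.sum_congr rfl fun k _ => ?_
        congr 1
        symm
        simp [ite_mul]
    _ = ∑ k, (∑ j, ((∑ i : Fin N, (starRingEnd ℂ) (c i j) * c i k) * ⟪e j, f⟫)) • e k := by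
        simp_rw [csum]
    _ = ∑ i, ⟪∑ j, c i j • e j, f⟫ • ∑ j, c i j • e j := by
        simp_rw [hinner, Finset.sum_smul, Finset.smul_sum, Finset.sum_mul, smul_smul,
          Finset.sum_smul]
        rw [show (∑ k : Fin n, ∑ j : Fin n, ∑ i : Fin N,
              ((starRingEnd ℂ) (c i j) * c i k * ⟪e j, f⟫) • e k)
            = ∑ i : Fin N, ∑ j : Fin n, ∑ k : Fin n,
              ((starRingEnd ℂ) (c i j) * c i k * ⟪e j, f⟫) • e k from
          (Finset.sum_congr rfl fun k _ => Finset.sum_comm).trans <|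
            Finset.sum_comm.trans <| Finset.sum_congr rfl fun i _ => Finset.sum_comm]
        refine Finset.sum_congr rfl fun i _ => Finset.sum_congr rfl fun j _ =>
          Finset.sum_congr rfl fun k _ => ?_
        congr 1
        ring
  · -- norms
    intro i
    have h1 : ⟪∑ j, c i j • e j, ∑ j, c i j • e j⟫ = ((∑ j, μ j) / N : ℝ) := by
      rw [e.orthonormal.inner_sum (c i) (c i) Finset.univ]
      simp_rw [hcc]
      rw [← Complex.ofReal_sum]
      push_cast
      rw [Finset.sum_div]
    have h2 := @inner_self_eq_norm_sq ℂ _ _ _ _ (∑ j, c i j • e j)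
    rw [h1] at h2
    rw [← h2, htr]
    simp
  · -- sup
    have key : ∀ i : Fin N, ‖∑ j, c i j • e j‖ * ‖∑ j, c i j • e j‖
        = (LinearMap.trace ℂ H (K : H →ₗ[ℂ] H)).re / N := by
      intro i
      have h1 : ⟪∑ j, c i j • e j, ∑ j, c i j • e j⟫ = ((∑ j, μ j) / N : ℝ) := by
        rw [e.orthonormal.inner_sum (c i) (c i) Finset.univ]
        simp_rw [hcc]
        rw [← Complex.ofReal_sum]
        push_cast
        rw [Finset.sum_div]
      have h2 := @inner_self_eq_norm_sq ℂ _ _ _ _ (∑ j, c i j • e j)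
      rw [h1] at h2
      rw [← pow_two, ← h2, htr]
      simp
    haveI : Nonempty (Fin N) := ⟨⟨0, hNpos⟩⟩
    simp_rw [key]
    exact ciSup_const
end

section
/- Let K be a positive semidefinite bounded linear operator on H and let (F,G) be an (N,n) K-dual pair. Then max_{1≤i≤N} |⟨f_i, g_i⟩| ≥ tr(K)/N, and equality max_{1≤i≤N} |⟨f_i, g_i⟩| = tr(K)/N holds if and only if ⟨f_i, g_i⟩ = tr(K)/N for every i ∈ {1,…,N}. -/
/-!
Writing the `K`-dual pair as `K = ∑ i, rankOne (f i) (g i)` gives `tr K = ∑ i, ⟨f_i, g_i⟩`,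
a nonnegative real number because `K` is positive. Then `tr K / N` is the mean of the real parts
`Re ⟨f_i, g_i⟩ ≤ |⟨f_i, g_i⟩| ≤ max_j |⟨f_j, g_j⟩|`, and equality forces each term to be real,
nonnegative and equal to the maximum.
-/

open scoped ComplexOrder InnerProductSpace

local notation "⟪" x ", " y "⟫" => @inner ℂ _ _ x y

namespace LinearMap

theorem isPositive_of_forall_inner_map_self_nonneg {V : Type*} [NormedAddCommGroup V]
    [InnerProductSpace ℂ V] (T : V →ₗ[ℂ] V) (hT : ∀ v, 0 ≤ ⟪T v, v⟫) : T.IsPositive :=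
  T.isPositive_iff.2 ⟨(isSymmetric_iff_inner_map_self_real T).2 fun v ↦
    Complex.conj_eq_iff_im.2 (Complex.nonneg_iff.1 (hT v)).2.symm, hT⟩

theorem trace_eq_sum_inner_of_apply_eq_sum_smul {𝕜 E ι : Type*} [RCLike 𝕜]
    [NormedAddCommGroup E] [InnerProductSpace 𝕜 E] [FiniteDimensional 𝕜 E] [Fintype ι]
    {T : E →ₗ[𝕜] E} {f g : ι → E} (hT : ∀ x, T x = ∑ i, ⟪g i, x⟫_𝕜 • f i) :
    T.trace 𝕜 E = ∑ i, ⟪g i, f i⟫_𝕜 := by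
  have hT' : T = ∑ i, (InnerProductSpace.rankOne 𝕜 (f i) (g i) : E →ₗ[𝕜] E) := by
    ext x
    simp [hT]
  simp [hT', map_sum, InnerProductSpace.trace_rankOne]

end LinearMap

namespace Complex

variable {ι : Type*} [Fintype ι] (z : ι → ℂ)

theorem re_sum_div_card_le_iSup_norm :
    (∑ i, z i).re / Fintype.card ι ≤ ⨆ i, ‖z i‖ := by
  have hbdd : BddAbove (Set.range fun i ↦ ‖z i‖) := (Set.finite_range _).bddAbove
  refine div_le_of_le_mul₀ (Nat.cast_nonneg _) (Real.iSup_nonneg fun i ↦ norm_nonneg _) ?_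
  calc (∑ i, z i).re = ∑ i, (z i).re := re_sum _ _
    _ ≤ ∑ i, ‖z i‖ := Finset.sum_le_sum fun i _ ↦ re_le_norm _
    _ ≤ ∑ _i : ι, ⨆ i, ‖z i‖ := Finset.sum_le_sum fun i _ ↦ le_ciSup hbdd i
    _ = (⨆ i, ‖z i‖) * Fintype.card ι := by simp [mul_comm]

theorem eq_sum_div_card_of_iSup_norm_eq (h : ⨆ i, ‖z i‖ = (∑ i, z i).re / Fintype.card ι)
    (i : ι) : z i = (∑ i, z i) / Fintype.card ι := by
  have : Nonempty ι := ⟨i⟩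
  have hbdd : BddAbove (Set.range fun i ↦ ‖z i‖) := (Set.finite_range _).bddAbove
  set t := (∑ i, z i).re / Fintype.card ι
  have hn : (Fintype.card ι : ℝ) ≠ 0 := Nat.cast_ne_zero.2 Fintype.card_ne_zero
  have hnorm_le : ∀ j, ‖z j‖ ≤ t := fun j ↦ h ▸ le_ciSup hbdd j
  have hre_eq : ∀ j, (z j).re = t := by
    have hsum : ∑ j, (t - (z j).re) = 0 := by
      simp only [Finset.sum_sub_distrib, Finset.sum_const, Finset.card_univ, nsmul_eq_mul, t,
        ← re_sum]
      field_simp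
      ring
    intro j
    linarith [(Finset.sum_eq_zero_iff_of_nonneg fun j _ ↦
      sub_nonneg.2 ((re_le_norm _).trans (hnorm_le j))).1 hsum j (Finset.mem_univ j)]
  have hz : ∀ j, z j = t := fun j ↦ by
    have hnonneg : 0 ≤ z j := re_eq_norm.1 <| le_antisymm (re_le_norm _) (hre_eq j ▸ hnorm_le j)
    rw [← hre_eq j]
    exact eq_re_of_ofReal_le (r := 0) (by simpa using hnonneg)
  simp only [hz, Finset.sum_const, Finset.card_univ, nsmul_eq_mul]
  field_simp

theorem iSup_norm_eq_of_forall_eq_sum_div_card (hs : 0 ≤ ∑ i, z i)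
    (h : ∀ i, z i = (∑ i, z i) / Fintype.card ι) :
    ⨆ i, ‖z i‖ = (∑ i, z i).re / Fintype.card ι := by
  generalize ∑ i, z i = s at hs h
  rcases isEmpty_or_nonempty ι with hι | hι
  · simp
  · simp only [h, ciSup_const, norm_div, norm_natCast, ← re_eq_norm.2 hs]

end Complex

/-- The paper's `⟨f, g⟩` is linear in the first slot, so its `⟨f_i, g_i⟩` is `⟪G i, F i⟫` here. -/
theorem stmt4_general
    {H : Type*} [NormedAddCommGroup H] [InnerProductSpace ℂ H] [FiniteDimensional ℂ H]
    {N : ℕ}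
    (K : H →L[ℂ] H) (hK : ∀ f : H, 0 ≤ ⟪K f, f⟫)
    (F G : Fin N → H)
    (hdual : ∀ f : H, K f = ∑ i, ⟪G i, f⟫ • F i) :
    (LinearMap.trace ℂ H (K : H →ₗ[ℂ] H)).re / N ≤ ⨆ i, ‖⟪G i, F i⟫‖ ∧
    ((⨆ i, ‖⟪G i, F i⟫‖) = (LinearMap.trace ℂ H (K : H →ₗ[ℂ] H)).re / N ↔
      ∀ i, ⟪G i, F i⟫ = LinearMap.trace ℂ H (K : H →ₗ[ℂ] H) / N) := by
  have htrace : LinearMap.trace ℂ H (K : H →ₗ[ℂ] H) = ∑ i, ⟪G i, F i⟫ :=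
    LinearMap.trace_eq_sum_inner_of_apply_eq_sum_smul hdual
  have htrace_nonneg : 0 ≤ ∑ i, ⟪G i, F i⟫ :=
    htrace ▸ (LinearMap.isPositive_of_forall_inner_map_self_nonneg _ hK).trace_nonneg
  rw [htrace]
  have hle := Complex.re_sum_div_card_le_iSup_norm fun i ↦ ⟪G i, F i⟫
  have heq := Complex.eq_sum_div_card_of_iSup_norm_eq fun i ↦ ⟪G i, F i⟫
  have hge := Complex.iSup_norm_eq_of_forall_eq_sum_div_card _ htrace_nonneg
  rw [Fintype.card_fin] at hle heq hge
  exact ⟨hle, heq, hge⟩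

/-- If `K` is positive semidefinite and `(F, G)` is an `(N, n)` `K`-dual pair,
then `max_i |⟨f_i, g_i⟩| ≥ tr(K)/N`, with equality iff `⟨f_i, g_i⟩ = tr(K)/N` for every `i`.
(The paper's `⟨f, g⟩` is linear in the first slot, so `⟨f_i, g_i⟩` is Mathlib's `⟪g_i, f_i⟫`.) -/
theorem stmt4
    {H : Type*} [NormedAddCommGroup H] [InnerProductSpace ℂ H] [FiniteDimensional ℂ H]
    (hdim : 1 ≤ Module.finrank ℂ H)
    {N : ℕ} (hN : 1 ≤ N)
    (K : H →L[ℂ] H) (hK : ∀ f : H, 0 ≤ ⟪K f, f⟫)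
    (F G : Fin N → H)
    (hdual : ∀ f : H, K f = ∑ i, ⟪G i, f⟫ • F i) :
    (LinearMap.trace ℂ H (K : H →ₗ[ℂ] H)).re / N ≤ ⨆ i, ‖⟪G i, F i⟫‖ ∧
    ((⨆ i, ‖⟪G i, F i⟫‖) = (LinearMap.trace ℂ H (K : H →ₗ[ℂ] H)).re / N ↔
      ∀ i, ⟪G i, F i⟫ = LinearMap.trace ℂ H (K : H →ₗ[ℂ] H) / N) :=
  stmt4_general K hK F G hdual
end

section
/- Let K be a self-adjoint bounded linear operator on H and let G = (g_1,…,g_N) be a K-dual of F = (f_1,…,f_N). Then ∑_{i=1}^N ∑_{j=1}^N ⟨g_i, f_j⟩⟨g_j, f_i⟩ = tr(K²). -/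
local notation "⟪" x ", " y "⟫" => @inner ℂ _ _ x y

/-- If `K` is a self-adjoint bounded operator on `H` and `G` is a `K`-dual of `F`,
then `∑_{i,j} ⟨g_i, f_j⟩⟨g_j, f_i⟩ = tr(K²)`.
(The paper's `⟨f, g⟩` is linear in the first slot, so `⟨g_i, f_j⟩` is Mathlib's `⟪f_j, g_i⟫`.) -/
theorem stmt6
    {H : Type*} [NormedAddCommGroup H] [InnerProductSpace ℂ H] [FiniteDimensional ℂ H]
    (hdim : 1 ≤ Module.finrank ℂ H)
    {N : ℕ} (hN : 1 ≤ N)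
    (K : H →L[ℂ] H) (hKsa : IsSelfAdjoint K)
    (F G : Fin N → H)
    (hdual : ∀ f : H, K f = ∑ i, ⟪G i, f⟫ • F i) :
    ∑ i : Fin N, ∑ j : Fin N, ⟪F j, G i⟫ * ⟪F i, G j⟫ =
      LinearMap.trace ℂ H ((K ∘L K : H →L[ℂ] H) : H →ₗ[ℂ] H) := by
  set b := stdOrthonormalBasis ℂ H with hb
  have htr : LinearMap.trace ℂ H ((K ∘L K : H →L[ℂ] H) : H →ₗ[ℂ] H)
      = ∑ e, ⟪b e, K (K (b e))⟫ := by
    rw [LinearMap.trace_eq_matrix_trace ℂ b.toBasis, Matrix.trace]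
    simp [LinearMap.toMatrix_apply, Matrix.diag, OrthonormalBasis.coe_toBasis_repr_apply,
      OrthonormalBasis.repr_apply_apply]
  have hKK : ∀ x : H, ⟪x, K (K x)⟫ = ∑ j, ∑ k, ⟪G j, F k⟫ * (⟪G k, x⟫ * ⟪x, F j⟫) := by
    intro x
    rw [hdual (K x), inner_sum]
    refine Finset.sum_congr rfl fun j _ => ?_
    rw [inner_smul_right, hdual x, inner_sum, Finset.sum_mul]
    refine Finset.sum_congr rfl fun k _ => ?_
    rw [inner_smul_right]
    ring
  have h1 : LinearMap.trace ℂ H ((K ∘L K : H →L[ℂ] H) : H →ₗ[ℂ] H)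
      = ∑ j, ∑ k, ⟪G j, F k⟫ * ⟪G k, F j⟫ := by
    rw [htr]
    simp_rw [hKK]
    rw [Finset.sum_comm]
    refine Finset.sum_congr rfl fun j _ => ?_
    rw [Finset.sum_comm]
    refine Finset.sum_congr rfl fun k _ => ?_
    rw [← Finset.mul_sum]
    congr 1
    exact b.sum_inner_mul_inner (G k) (F j)
  have hreal : (starRingEnd ℂ) (LinearMap.trace ℂ H ((K ∘L K : H →L[ℂ] H) : H →ₗ[ℂ] H))
      = LinearMap.trace ℂ H ((K ∘L K : H →L[ℂ] H) : H →ₗ[ℂ] H) := by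
    rw [htr, map_sum]
    refine Finset.sum_congr rfl fun e _ => ?_
    have : ⟪b e, K (K (b e))⟫ = ⟪K (b e), K (b e)⟫ := by
      rw [← ContinuousLinearMap.adjoint_inner_left, hKsa.adjoint_eq]
    rw [this, inner_conj_symm]
  calc ∑ i : Fin N, ∑ j : Fin N, ⟪F j, G i⟫ * ⟪F i, G j⟫
      = (starRingEnd ℂ) (∑ j, ∑ k, ⟪G j, F k⟫ * ⟪G k, F j⟫) := by
        simp [map_sum, inner_conj_symm]
    _ = LinearMap.trace ℂ H ((K ∘L K : H →L[ℂ] H) : H →ₗ[ℂ] H) := by rw [← h1, hreal]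
end

section
/- Let N ≥ 2, let K be a positive semidefinite bounded linear operator on H, and let (F,G) be an (N,n) K-dual pair which is 2-uniform, i.e., ⟨f_i, g_i⟩ = tr(K)/N for all i and there is a constant c with ⟨f_i, g_j⟩⟨f_j, g_i⟩ = c for all i ≠ j. Then c = (tr(K²) − (tr K)²/N) / (N(N−1)). -/
open scoped ComplexOrder

local notation "⟪" x ", " y "⟫" => @inner ℂ _ _ x y

lemma trace_eq_sum_inner' {H : Type*} [NormedAddCommGroup H] [InnerProductSpace ℂ H]
    [FiniteDimensional ℂ H] {ι : Type*} [Fintype ι] [DecidableEq ι]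
    (b : OrthonormalBasis ι ℂ H) (T : H →ₗ[ℂ] H) :
    LinearMap.trace ℂ H T = ∑ k, ⟪b k, T (b k)⟫ := by
  rw [LinearMap.trace_eq_matrix_trace ℂ b.toBasis T, Matrix.trace]
  congr 1
  ext k
  rw [Matrix.diag_apply, LinearMap.toMatrix_apply, OrthonormalBasis.coe_toBasis,
    OrthonormalBasis.coe_toBasis_repr_apply, b.repr_apply_apply]

/-- Let `N ≥ 2`, `K` positive semidefinite, and let `(F, G)` be a 2-uniform
`(N, n)` `K`-dual pair: `⟨f_i, g_i⟩ = tr(K)/N` for all `i` and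
`⟨f_i, g_j⟩⟨f_j, g_i⟩ = c` for all `i ≠ j`.  Then `c = (tr(K²) − (tr K)²/N)/(N(N−1))`.
(The paper's `⟨f, g⟩` is linear in the first slot, so `⟨f_i, g_j⟩` is Mathlib's `⟪g_j, f_i⟫`.) -/
theorem stmt7
    {H : Type*} [NormedAddCommGroup H] [InnerProductSpace ℂ H] [FiniteDimensional ℂ H]
    (hdim : 1 ≤ Module.finrank ℂ H)
    {N : ℕ} (hN : 2 ≤ N)
    (K : H →L[ℂ] H) (hK : ∀ f : H, 0 ≤ ⟪K f, f⟫)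
    (F G : Fin N → H)
    (hdual : ∀ f : H, K f = ∑ i, ⟪G i, f⟫ • F i)
    (huni1 : ∀ i, ⟪G i, F i⟫ = LinearMap.trace ℂ H (K : H →ₗ[ℂ] H) / N)
    (c : ℂ)
    (huni2 : ∀ i j, i ≠ j → ⟪G j, F i⟫ * ⟪G i, F j⟫ = c) :
    c = (LinearMap.trace ℂ H ((K ∘L K : H →L[ℂ] H) : H →ₗ[ℂ] H) -
          (LinearMap.trace ℂ H (K : H →ₗ[ℂ] H)) ^ 2 / N) / (N * (N - 1)) := by
  classical
  set t := LinearMap.trace ℂ H (K : H →ₗ[ℂ] H) with ht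
  have b := stdOrthonormalBasis ℂ H
  have hNC : (N : ℂ) ≠ 0 := Nat.cast_ne_zero.mpr (by omega)
  have hN1 : (N : ℂ) - 1 ≠ 0 := by
    intro h
    have : (N : ℂ) = 1 := by linear_combination h
    rw [show (1 : ℂ) = ((1 : ℕ) : ℂ) by norm_num] at this
    exact absurd (Nat.cast_injective this) (by omega)
  -- trace of K²
  have htr2 : LinearMap.trace ℂ H ((K ∘L K : H →L[ℂ] H) : H →ₗ[ℂ] H)
      = ∑ i, ∑ j, ⟪G j, F i⟫ * ⟪G i, F j⟫ := by
    rw [trace_eq_sum_inner' b]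
    have hKK : ∀ f : H, (K ∘L K) f = ∑ i, ∑ j, (⟪G j, f⟫ * ⟪G i, F j⟫) • F i := by
      intro f
      simp only [ContinuousLinearMap.comp_apply]
      rw [hdual f, map_sum]
      rw [Finset.sum_comm]
      congr 1
      ext j
      rw [ContinuousLinearMap.map_smul, hdual (F j), Finset.smul_sum]
      congr 1
      ext i
      rw [smul_smul]
    simp_rw [ContinuousLinearMap.coe_coe, hKK, inner_sum, inner_smul_right]
    rw [Finset.sum_comm]
    congr 1
    ext i
    rw [Finset.sum_comm]
    congr 1
    ext j
    rw [Finset.sum_congr rfl (fun k _ => mul_right_comm (⟪G j, b k⟫) (⟪G i, F j⟫) (⟪b k, F i⟫)),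
      ← Finset.sum_mul, b.sum_inner_mul_inner]
  have hsum : ∑ i, ∑ j, ⟪G j, F i⟫ * ⟪G i, F j⟫
      = (N : ℂ) * (t / N) ^ 2 + (N * (N - 1)) * c := by
    have : ∀ i : Fin N, ∑ j, ⟪G j, F i⟫ * ⟪G i, F j⟫
        = (t / N) ^ 2 + ((N : ℂ) - 1) * c := by
      intro i
      rw [← Finset.sum_erase_add _ _ (Finset.mem_univ i)]
      rw [Finset.sum_congr rfl (fun j hj => huni2 i j (Finset.ne_of_mem_erase hj).symm)]
      rw [Finset.sum_const, huni1 i]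
      simp only [Finset.card_erase_of_mem (Finset.mem_univ i), Finset.card_univ,
        Fintype.card_fin, nsmul_eq_mul]
      push_cast [Nat.cast_sub (by omega : 1 ≤ N)]
      ring
    rw [Finset.sum_congr rfl (fun i _ => this i), Finset.sum_const, Finset.card_univ,
      Fintype.card_fin, nsmul_eq_mul]
    ring
  rw [htr2, hsum]
  field_simp
  ring
end

section
/- Let H be a real inner product space of finite dimension n ≥ 1, let N ≥ 2, let K be a positive semidefinite bounded linear operator on H, and let (F,G) be an (N,n) K-dual pair that is 1-uniform, i.e., ⟨f_i, g_i⟩ = tr(K)/N for all i. Set μ = tr(K²) − (tr K)²/N. If μ ≥ 0, then max_{i≠j} e_{ij}(F,G) ≥ tr(K)/N + √( μ / (N(N−1)) ); if μ < 0, then max_{i≠j} e_{ij}(F,G) ≥ √( (tr(K)/N)² − μ/(N(N−1)) ). -/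
local notation "⟪" x ", " y "⟫" => @inner ℝ _ _ x y

/-- The two-erasure error quantity `e_{ij}(F,G)`: with `t = tr(K)/N` and
`c = ⟨g_i, f_j⟩·⟨g_j, f_i⟩`, it equals `t + √c` when `c ≥ 0` and `√(t² − c)` when `c < 0`. -/
noncomputable def eErr (t c : ℝ) : ℝ :=
  if 0 ≤ c then t + Real.sqrt c else Real.sqrt (t ^ 2 - c)

/-! Since `K = ∑ᵢ ⟨gᵢ, ·⟩ fᵢ`, the trace of `K²` is `∑_{i,j} ⟨gᵢ, fⱼ⟩⟨gⱼ, fᵢ⟩`. By uniformity the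
`N` diagonal terms are `(tr K / N)²`, so the `N(N−1)` off-diagonal products `c_{ij}` sum to `μ`:
some `c_{ij}` is at least their mean `μ/(N(N−1))` and some is at most it. Since `e_{ij}` increases
with `c_{ij}` on `c ≥ 0` and decreases on `c < 0`, the first gives the bound when `μ ≥ 0`, the
second when `μ < 0`. -/

open Finset

theorem Finset.sum_offDiag_add_sum_diag {α M : Type*} [DecidableEq α] [AddCommMonoid M]
    (s : Finset α) (f : α × α → M) :
    ∑ p ∈ s.offDiag, f p + ∑ i ∈ s, f (i, i) = ∑ p ∈ s ×ˢ s, f p := by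
  rw [← diag_union_offDiag, sum_union (disjoint_diag_offDiag s), add_comm, diag, sum_map]
  rfl

section Trace

variable {H : Type*} [NormedAddCommGroup H] [InnerProductSpace ℝ H] [FiniteDimensional ℝ H]
  {ι : Type*} [Fintype ι]

theorem LinearMap.trace_eq_sum_inner_of_apply_eq_sum_s8 {T : H →ₗ[ℝ] H} {g h : ι → H}
    (hT : ∀ f, T f = ∑ i, ⟪g i, f⟫ • h i) :
    LinearMap.trace ℝ H T = ∑ i, ⟪g i, h i⟫ := by
  have : T = ∑ i, (innerₗ H (g i)).smulRight (h i) := by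
    ext f; simp [hT]
  simp [this, LinearMap.trace_smulRight]

theorem LinearMap.trace_comp_self_eq_sum_of_apply_eq_sum {K : H →ₗ[ℝ] H} {F G : ι → H}
    (hK : ∀ f, K f = ∑ i, ⟪G i, f⟫ • F i) :
    LinearMap.trace ℝ H (K ∘ₗ K) = ∑ p : ι × ι, ⟪G p.1, F p.2⟫ * ⟪G p.2, F p.1⟫ := by
  have hKK : ∀ f, K (K f) = ∑ p : ι × ι, ⟪⟪G p.1, F p.2⟫ • G p.2, f⟫ • F p.1 := by
    intro f
    simp only [hK, inner_sum, real_inner_smul_right, real_inner_smul_left, Fintype.sum_prod_type,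
      sum_smul]
    exact sum_congr rfl fun i _ ↦ sum_congr rfl fun j _ ↦ by rw [mul_comm]
  rw [LinearMap.trace_eq_sum_inner_of_apply_eq_sum_s8 hKK]
  simp [real_inner_smul_left]

theorem sum_offDiag_inner_mul_inner_of_uniform [DecidableEq ι] {K : H →ₗ[ℝ] H} {F G : ι → H}
    (hK : ∀ f, K f = ∑ i, ⟪G i, f⟫ • F i)
    (huni : ∀ i, ⟪G i, F i⟫ = LinearMap.trace ℝ H K / Fintype.card ι) :
    ∑ p ∈ univ.offDiag, ⟪G p.1, F p.2⟫ * ⟪G p.2, F p.1⟫ =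
      LinearMap.trace ℝ H (K ∘ₗ K) - LinearMap.trace ℝ H K ^ 2 / Fintype.card ι := by
  have hdiag : ∑ i : ι, ⟪G i, F i⟫ * ⟪G i, F i⟫ = LinearMap.trace ℝ H K ^ 2 / Fintype.card ι := by
    rcases eq_or_ne (Fintype.card ι : ℝ) 0 with hι | hι
    · simp_all
    · simp only [huni, sum_const, card_univ, nsmul_eq_mul]
      field_simp
  rw [LinearMap.trace_comp_self_eq_sum_of_apply_eq_sum hK, ← hdiag, ← univ_product_univ,
    ← sum_offDiag_add_sum_diag, add_sub_cancel_right]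

end Trace

theorem le_eErr_of_le {t m c : ℝ} (hm : 0 ≤ m) (hc : m ≤ c) : t + √m ≤ eErr t c := by
  rw [eErr, if_pos (hm.trans hc)]
  gcongr

theorem le_eErr_of_le_of_neg {t m c : ℝ} (hm : m < 0) (hc : c ≤ m) :
    √(t ^ 2 - m) ≤ eErr t c := by
  rw [eErr, if_neg (by linarith)]
  gcongr

theorem le_ciSup_of_ne {ι : Type*} [Finite ι] (f : ι × ι → ℝ) {p : ι × ι} (hp : p.1 ≠ p.2) :
    f p ≤ ⨆ q : {q : ι × ι // q.1 ≠ q.2}, f q.1 :=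
  le_ciSup (f := fun q : {q : ι × ι // q.1 ≠ q.2} ↦ f q.1) (Set.finite_range _).bddAbove ⟨p, hp⟩

theorem stmt8_general
    {H : Type*} [NormedAddCommGroup H] [InnerProductSpace ℝ H] [FiniteDimensional ℝ H]
    {N : ℕ} (hN : 2 ≤ N)
    (K : H →L[ℝ] H)
    (F G : Fin N → H)
    (hdual : ∀ f : H, K f = ∑ i, ⟪G i, f⟫ • F i)
    (huni : ∀ i, ⟪G i, F i⟫ = LinearMap.trace ℝ H (K : H →ₗ[ℝ] H) / N)
    (μ : ℝ)
    (hμ : μ = LinearMap.trace ℝ H ((K ∘L K : H →L[ℝ] H) : H →ₗ[ℝ] H) -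
          (LinearMap.trace ℝ H (K : H →ₗ[ℝ] H)) ^ 2 / N) :
    (0 ≤ μ →
      LinearMap.trace ℝ H (K : H →ₗ[ℝ] H) / N + Real.sqrt (μ / (N * (N - 1))) ≤
        ⨆ p : {p : Fin N × Fin N // p.1 ≠ p.2},
          eErr (LinearMap.trace ℝ H (K : H →ₗ[ℝ] H) / N)
            (⟪G p.1.1, F p.1.2⟫ * ⟪G p.1.2, F p.1.1⟫)) ∧
    (μ < 0 →
      Real.sqrt ((LinearMap.trace ℝ H (K : H →ₗ[ℝ] H) / N) ^ 2 - μ / (N * (N - 1))) ≤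
        ⨆ p : {p : Fin N × Fin N // p.1 ≠ p.2},
          eErr (LinearMap.trace ℝ H (K : H →ₗ[ℝ] H) / N)
            (⟪G p.1.1, F p.1.2⟫ * ⟪G p.1.2, F p.1.1⟫)) := by
  set c : Fin N × Fin N → ℝ := fun p ↦ ⟪G p.1, F p.2⟫ * ⟪G p.2, F p.1⟫
  set m := μ / (N * (N - 1))
  have hNN : (0 : ℝ) < N * (N - 1) := by
    have : (2 : ℝ) ≤ N := by exact_mod_cast hN
    nlinarith
  have hoff : (univ : Finset (Fin N)).offDiag.Nonempty := ⟨(⟨0, by omega⟩, ⟨1, by omega⟩), by simp⟩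
  have hsum : ∑ p ∈ univ.offDiag, c p = ∑ _p ∈ (univ : Finset (Fin N)).offDiag, m := by
    have hcard : ((univ : Finset (Fin N)).offDiag.card : ℝ) = N * (N - 1) := by
      rw [offDiag_card, card_univ, Fintype.card_fin, Nat.cast_sub (Nat.le_mul_self N)]
      push_cast
      ring
    rw [sum_const, nsmul_eq_mul, hcard, mul_div_cancel₀ _ hNN.ne', hμ]
    simpa using
      sum_offDiag_inner_mul_inner_of_uniform (K := K.toLinearMap) hdual (by simpa using huni)
  constructor
  · intro hμ0
    obtain ⟨p, hp, hle⟩ := exists_le_of_sum_le hoff hsum.ge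
    exact (le_eErr_of_le (by positivity) hle).trans
      (le_ciSup_of_ne (fun q ↦ eErr _ (c q)) (mem_offDiag.1 hp).2.2)
  · intro hμ0
    obtain ⟨p, hp, hle⟩ := exists_le_of_sum_le hoff hsum.le
    exact (le_eErr_of_le_of_neg (div_neg_of_neg_of_pos hμ0 hNN) hle).trans
      (le_ciSup_of_ne (fun q ↦ eErr _ (c q)) (mem_offDiag.1 hp).2.2)

/-- real Hilbert space, `N ≥ 2`, `K` positive semidefinite, `(F, G)` a 1-uniform
`(N, n)` `K`-dual pair; with `μ = tr(K²) − (tr K)²/N`: if `μ ≥ 0` then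
`max_{i≠j} e_{ij}(F,G) ≥ tr(K)/N + √(μ/(N(N−1)))`, and if `μ < 0` then
`max_{i≠j} e_{ij}(F,G) ≥ √((tr(K)/N)² − μ/(N(N−1)))`. -/
theorem stmt8
    {H : Type*} [NormedAddCommGroup H] [InnerProductSpace ℝ H] [FiniteDimensional ℝ H]
    (hdim : 1 ≤ Module.finrank ℝ H)
    {N : ℕ} (hN : 2 ≤ N)
    (K : H →L[ℝ] H) (hKsa : IsSelfAdjoint K) (hK : ∀ f : H, 0 ≤ ⟪K f, f⟫)
    (F G : Fin N → H)
    (hdual : ∀ f : H, K f = ∑ i, ⟪G i, f⟫ • F i)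
    (huni : ∀ i, ⟪G i, F i⟫ = LinearMap.trace ℝ H (K : H →ₗ[ℝ] H) / N)
    (μ : ℝ)
    (hμ : μ = LinearMap.trace ℝ H ((K ∘L K : H →L[ℝ] H) : H →ₗ[ℝ] H) -
          (LinearMap.trace ℝ H (K : H →ₗ[ℝ] H)) ^ 2 / N) :
    (0 ≤ μ →
      LinearMap.trace ℝ H (K : H →ₗ[ℝ] H) / N + Real.sqrt (μ / (N * (N - 1))) ≤
        ⨆ p : {p : Fin N × Fin N // p.1 ≠ p.2},
          eErr (LinearMap.trace ℝ H (K : H →ₗ[ℝ] H) / N)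
            (⟪G p.1.1, F p.1.2⟫ * ⟪G p.1.2, F p.1.1⟫)) ∧
    (μ < 0 →
      Real.sqrt ((LinearMap.trace ℝ H (K : H →ₗ[ℝ] H) / N) ^ 2 - μ / (N * (N - 1))) ≤
        ⨆ p : {p : Fin N × Fin N // p.1 ≠ p.2},
          eErr (LinearMap.trace ℝ H (K : H →ₗ[ℝ] H) / N)
            (⟪G p.1.1, F p.1.2⟫ * ⟪G p.1.2, F p.1.1⟫)) :=
  stmt8_general hN K F G hdual huni μ hμ
end

section
/- Let K be a bounded linear operator on H with Moore–Penrose pseudoinverse P, and let F = (f_1,…,f_N) be a Parseval K-frame for H. Set L = max_{1≤i≤N} ‖f_i‖·‖P f_i‖, Λ₁ = { i : ‖f_i‖·‖P f_i‖ = L }, Λ₂ = {1,…,N} \ Λ₁, V₁ = span{ f_i : i ∈ Λ₁ } and V₂ = span{ f_i : i ∈ Λ₂ }. If V₁ ∩ V₂ = {0}, then every K-dual G = (g_1,…,g_N) of F satisfies max_{1≤i≤N} ‖f_i‖·‖g_i‖ ≥ L. -/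
local notation "⟪" x ", " y "⟫" => @inner ℂ _ _ x y

/-!
The Parseval condition says that the frame operator `∑ᵢ ⟪fᵢ, ·⟫ fᵢ` equals `K K*`, and the
Moore–Penrose identities then make `(P fᵢ)` a `K`-dual. For any other `K`-dual `G` the vectors
`dᵢ = gᵢ - P fᵢ` satisfy `∑ᵢ ⟪dᵢ, x⟫ fᵢ = 0` for all `x`; since `V₁ ∩ V₂ = 0`, the same holds for
the sum over `Λ₁` alone. Taking the trace of `x ↦ ∑_{i ∈ Λ₁} ⟪dᵢ, x⟫ P fᵢ = 0` gives
`∑_{i ∈ Λ₁} ⟪gᵢ, P fᵢ⟫ = ∑_{i ∈ Λ₁} ‖P fᵢ‖²`, so `‖gᵢ‖ ≥ ‖P fᵢ‖` for some `i ∈ Λ₁`, and then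
`‖fᵢ‖ ‖gᵢ‖ ≥ ‖fᵢ‖ ‖P fᵢ‖ = L`.
-/

section

open scoped InnerProductSpace
open Finset InnerProductSpace ContinuousLinearMap

variable {𝕜 E ι : Type*} [RCLike 𝕜] [NormedAddCommGroup E] [InnerProductSpace 𝕜 E]

section Frame

variable [Fintype ι]

variable (𝕜) in
noncomputable def frameOperator (F : ι → E) : E →L[𝕜] E :=
  ∑ i, rankOne 𝕜 (F i) (F i)

theorem frameOperator_apply (F : ι → E) (x : E) :
    frameOperator 𝕜 F x = ∑ i, ⟪F i, x⟫_𝕜 • F i := by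
  simp [frameOperator]

theorem re_inner_frameOperator_apply_self (F : ι → E) (x : E) :
    RCLike.re ⟪frameOperator 𝕜 F x, x⟫_𝕜 = ∑ i, ‖⟪F i, x⟫_𝕜‖ ^ 2 := by
  simp only [frameOperator_apply, sum_inner, inner_smul_left, RCLike.conj_mul, map_sum]
  norm_cast

def IsKDual (K : E →L[𝕜] E) (F G : ι → E) : Prop :=
  ∀ x, K x = ∑ i, ⟪G i, x⟫_𝕜 • F i

theorem IsKDual.sum_inner_sub_smul_eq_zero {K : E →L[𝕜] E} {F G G' : ι → E}
    (hG : IsKDual K F G) (hG' : IsKDual K F G') (x : E) :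
    ∑ i, ⟪G i - G' i, x⟫_𝕜 • F i = 0 := by
  simp [inner_sub_left, sub_smul, ← hG x, ← hG' x]

variable [CompleteSpace E]

theorem isSelfAdjoint_frameOperator (F : ι → E) :
    IsSelfAdjoint (frameOperator 𝕜 F) :=
  isSelfAdjoint_sum _ fun i _ => by simp [IsSelfAdjoint, star_eq_adjoint]

def IsParsevalKFrame (K : E →L[𝕜] E) (F : ι → E) : Prop :=
  ∀ x, ∑ i, ‖⟪F i, x⟫_𝕜‖ ^ 2 = ‖adjoint K x‖ ^ 2

theorem IsParsevalKFrame.frameOperator_eq {K : E →L[𝕜] E} {F : ι → E}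
    (hF : IsParsevalKFrame K F) : frameOperator 𝕜 F = K ∘L adjoint K := by
  -- both sides are self-adjoint, and a self-adjoint operator is determined by its quadratic form
  have hsymm : (frameOperator 𝕜 F - K ∘L adjoint K).toLinearMap.IsSymmetric :=
    ((isSelfAdjoint_frameOperator F).sub
      (isPositive_self_comp_adjoint K).isSelfAdjoint).isSymmetric
  rw [← sub_eq_zero, ← ContinuousLinearMap.coe_inj, toLinearMap_zero,
    ← hsymm.inner_map_self_eq_zero]
  intro x
  have hK := apply_norm_sq_eq_inner_adjoint_left (adjoint K) x
  rw [adjoint_adjoint] at hK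
  rw [← hsymm.coe_re_inner_apply_self]
  simp [inner_sub_left, re_inner_frameOperator_apply_self, hF x, hK]

theorem IsParsevalKFrame.isKDual_comp {K P : E →L[𝕜] E} {F : ι → E}
    (hF : IsParsevalKFrame K F) (hKPK : K ∘L P ∘L K = K) (hPK : IsSelfAdjoint (P ∘L K)) :
    IsKDual K F (P ∘ F) := by
  intro x
  have hKP : adjoint K (adjoint P x) = P (K x) := by
    simpa [adjoint_comp] using congr($(hPK.adjoint_eq) x)
  calc K x = K (P (K x)) := by simpa using congr($hKPK.symm x)
    _ = frameOperator 𝕜 F (adjoint P x) := by rw [hF.frameOperator_eq, comp_apply, hKP]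
    _ = ∑ i, ⟪P (F i), x⟫_𝕜 • F i := by simp [frameOperator_apply, adjoint_inner_right]

end Frame

theorem sum_filter_smul_eq_zero_of_inf_span_eq_bot {R M : Type*} [Ring R] [AddCommGroup M]
    [Module R M] {v : ι → M} {c : ι → R} (p : ι → Prop) [DecidablePred p] (s : Finset ι)
    (hv : Submodule.span R (v '' {i | p i}) ⊓ Submodule.span R (v '' {i | ¬ p i}) = ⊥)
    (h : ∑ i ∈ s, c i • v i = 0) : ∑ i ∈ s with p i, c i • v i = 0 := by
  have hsum_mem : ∀ q : ι → Prop, [DecidablePred q] →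
      ∑ i ∈ s with q i, c i • v i ∈ Submodule.span R (v '' {i | q i}) := fun q _ =>
    Submodule.sum_mem _ fun i hi =>
      Submodule.smul_mem _ _ (Submodule.subset_span ⟨i, (mem_filter.1 hi).2, rfl⟩)
  have hsplit := sum_filter_add_sum_filter_not s p fun i => c i • v i
  rw [h, add_eq_zero_iff_eq_neg] at hsplit
  rw [← Submodule.mem_bot R, ← hv]
  exact ⟨hsum_mem p, hsplit ▸ Submodule.neg_mem _ (hsum_mem fun i => ¬ p i)⟩

theorem sum_inner_eq_zero_of_sum_inner_smul_eq_zero [FiniteDimensional 𝕜 E] {s : Finset ι}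
    {u v : ι → E} (h : ∀ x, ∑ i ∈ s, ⟪u i, x⟫_𝕜 • v i = 0) : ∑ i ∈ s, ⟪u i, v i⟫_𝕜 = 0 := by
  have hzero : ∑ i ∈ s, (rankOne 𝕜 (v i) (u i)).toLinearMap = 0 := by
    ext x
    simpa using h x
  simpa [toLinearMap_rankOne, LinearMap.trace_smulRight] using congr(LinearMap.trace 𝕜 E $hzero)

theorem exists_mem_norm_le_norm_of_sum_inner_sub_eq_zero {s : Finset ι} (hs : s.Nonempty)
    {u v : ι → E} (h : ∑ i ∈ s, ⟪u i - v i, v i⟫_𝕜 = 0) : ∃ i ∈ s, ‖v i‖ ≤ ‖u i‖ := by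
  by_contra! hlt
  have hre : ∑ i ∈ s, RCLike.re ⟪u i, v i⟫_𝕜 = ∑ i ∈ s, ‖v i‖ ^ 2 := by
    simp only [inner_sub_left, sum_sub_distrib, sub_eq_zero] at h
    simp only [← inner_self_eq_norm_sq (𝕜 := 𝕜), ← map_sum, h]
  have hre_lt := calc
    ∑ i ∈ s, RCLike.re ⟪u i, v i⟫_𝕜 ≤ ∑ i ∈ s, ‖u i‖ * ‖v i‖ :=
        sum_le_sum fun i _ => re_inner_le_norm _ _
    _ < ∑ i ∈ s, ‖v i‖ ^ 2 := sum_lt_sum_of_nonempty hs fun i hi => by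
        rw [sq]
        exact mul_lt_mul_of_pos_right (hlt i hi) ((norm_nonneg _).trans_lt (hlt i hi))
  exact hre_lt.ne hre

end

theorem stmt11_general
    {H : Type*} [NormedAddCommGroup H] [InnerProductSpace ℂ H] [FiniteDimensional ℂ H]
    {N : ℕ}
    (K P : H →L[ℂ] H)
    (hP1 : K ∘L P ∘L K = K)
    (hP4 : IsSelfAdjoint (P ∘L K))
    (F : Fin N → H)
    (hParseval : ∀ f : H,
      ∑ i, ‖⟪F i, f⟫‖ ^ 2 = ‖ContinuousLinearMap.adjoint K f‖ ^ 2)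
    (L : ℝ) (hL : L = ⨆ i, ‖F i‖ * ‖P (F i)‖)
    (hV : Submodule.span ℂ (F '' {i | ‖F i‖ * ‖P (F i)‖ = L}) ⊓
          Submodule.span ℂ (F '' {i | ‖F i‖ * ‖P (F i)‖ ≠ L}) = ⊥)
    (G : Fin N → H)
    (hdual : ∀ f : H, K f = ∑ i, ⟪G i, f⟫ • F i) :
    L ≤ ⨆ i, ‖F i‖ * ‖G i‖ := by
  rcases isEmpty_or_nonempty (Fin N) with hN | hN
  · simp [hL]
  have hcanon : IsKDual K F (P ∘ F) := IsParsevalKFrame.isKDual_comp hParseval hP1 hP4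
  have htrace : ∑ i with ‖F i‖ * ‖P (F i)‖ = L, ⟪G i - P (F i), P (F i)⟫ = 0 := by
    refine sum_inner_eq_zero_of_sum_inner_smul_eq_zero fun x => ?_
    have hrestrict := sum_filter_smul_eq_zero_of_inf_span_eq_bot _ _ hV
      (IsKDual.sum_inner_sub_smul_eq_zero hdual hcanon x)
    simpa using congr(P $hrestrict)
  obtain ⟨i₀, hi₀⟩ := exists_eq_ciSup_of_finite (f := fun i => ‖F i‖ * ‖P (F i)‖)
  obtain ⟨i, hi, hPG⟩ := exists_mem_norm_le_norm_of_sum_inner_sub_eq_zero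
    ⟨i₀, Finset.mem_filter.2 ⟨Finset.mem_univ _, hi₀.trans hL.symm⟩⟩ htrace
  calc L = ‖F i‖ * ‖P (F i)‖ := (Finset.mem_filter.1 hi).2.symm
    _ ≤ ‖F i‖ * ‖G i‖ := by gcongr
    _ ≤ ⨆ i, ‖F i‖ * ‖G i‖ := le_ciSup (f := fun i => ‖F i‖ * ‖G i‖) (Set.finite_range _).bddAbove i

/-- Let `K` be a bounded operator on `H` with Moore–Penrose pseudoinverse `P`
and `F` a Parseval `K`-frame.  With `L = max_i ‖f_i‖·‖P f_i‖`, `Λ₁` the set of indices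
attaining `L`, `Λ₂` its complement, `V₁ = span{f_i : i ∈ Λ₁}`, `V₂ = span{f_i : i ∈ Λ₂}`:
if `V₁ ∩ V₂ = {0}` then every `K`-dual `G` of `F` satisfies `max_i ‖f_i‖·‖g_i‖ ≥ L`.
(The paper's `⟨f, g⟩` is linear in the first slot, i.e. Mathlib's `⟪g, f⟫`.) -/
theorem stmt11
    {H : Type*} [NormedAddCommGroup H] [InnerProductSpace ℂ H] [FiniteDimensional ℂ H]
    (hdim : 1 ≤ Module.finrank ℂ H)
    {N : ℕ} (hN : 1 ≤ N)
    (K P : H →L[ℂ] H)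
    (hP1 : K ∘L P ∘L K = K) (hP2 : P ∘L K ∘L P = P)
    (hP3 : IsSelfAdjoint (K ∘L P)) (hP4 : IsSelfAdjoint (P ∘L K))
    (F : Fin N → H)
    (hParseval : ∀ f : H,
      ∑ i, ‖⟪F i, f⟫‖ ^ 2 = ‖ContinuousLinearMap.adjoint K f‖ ^ 2)
    (L : ℝ) (hL : L = ⨆ i, ‖F i‖ * ‖P (F i)‖)
    (hV : Submodule.span ℂ (F '' {i | ‖F i‖ * ‖P (F i)‖ = L}) ⊓
          Submodule.span ℂ (F '' {i | ‖F i‖ * ‖P (F i)‖ ≠ L}) = ⊥)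
    (G : Fin N → H)
    (hdual : ∀ f : H, K f = ∑ i, ⟪G i, f⟫ • F i) :
    L ≤ ⨆ i, ‖F i‖ * ‖G i‖ :=
  stmt11_general K P hP1 hP4 F hParseval L hL hV G hdual
end

section
/- Let K be a positive semidefinite bounded linear operator on H with Moore–Penrose pseudoinverse P, and let F = (f_1,…,f_N) be a Parseval K-frame for H. Each ⟨f_i, P f_i⟩ is a nonnegative real number; set M = max_{1≤i≤N} ⟨f_i, P f_i⟩, J₁ = { i : ⟨f_i, P f_i⟩ = M }, W₁ = span{ f_i : i ∈ J₁ } and W₂ = span{ f_i : i ∉ J₁ }. If W₁ ∩ W₂ = {0}, then every K-dual G = (g_1,…,g_N) of F satisfies max_{1≤i≤N} |⟨f_i, g_i⟩| ≥ M (so the canonical K-dual is spectrally optimal for one erasure). -/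
open scoped ComplexOrder
open ContinuousLinearMap Finset

local notation "⟪" x ", " y "⟫" => @inner ℂ _ _ x y

/-! Any `K`-dual `G` differs from the canonical one `(P f_i)` by a family `D` with
`∑ ⟨f, D_i⟩ f_i = 0` for all `f`; this uses that the frame operator of a Parseval `K`-frame is
`K K*`. As `W₁ ∩ W₂ = 0`, the part of this sum indexed by `J₁` vanishes on its own, and its trace
gives `∑_{i ∈ J₁} ⟨f_i, g_i⟩ = ∑_{i ∈ J₁} ⟨f_i, P f_i⟩ = |J₁| M`. Hence some `|⟨f_i, g_i⟩|` is at
least `M`. -/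

structure IsMoorePenroseInverse {R : Type*} [Mul R] [Star R] (a p : R) : Prop where
  mul_mul_self : a * p * a = a
  mul_mul_pinv : p * a * p = p
  isSelfAdjoint_mul_pinv : IsSelfAdjoint (a * p)
  isSelfAdjoint_pinv_mul : IsSelfAdjoint (p * a)

namespace IsMoorePenroseInverse

variable {R : Type*} [Semigroup R] [StarMul R] {a p q : R}

theorem self_mul_eq (hp : IsMoorePenroseInverse a p) (hq : IsMoorePenroseInverse a q) :
    a * p = a * q :=
  calc a * p = a * q * a * p := by rw [hq.mul_mul_self]
    _ = star (a * q) * star (a * p) := by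
      rw [hq.isSelfAdjoint_mul_pinv.star_eq, hp.isSelfAdjoint_mul_pinv.star_eq, mul_assoc (a * q)]
    _ = star (a * p * a * q) := by rw [← star_mul, mul_assoc, mul_assoc, mul_assoc]
    _ = a * q := by rw [hp.mul_mul_self, hq.isSelfAdjoint_mul_pinv.star_eq]

theorem mul_self_eq (hp : IsMoorePenroseInverse a p) (hq : IsMoorePenroseInverse a q) :
    p * a = q * a :=
  calc p * a = p * (a * q * a) := by rw [hq.mul_mul_self]
    _ = star (p * a) * star (q * a) := by
      rw [hq.isSelfAdjoint_pinv_mul.star_eq, hp.isSelfAdjoint_pinv_mul.star_eq, mul_assoc,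
        mul_assoc]
    _ = star (q * (a * p * a)) := by rw [← star_mul, mul_assoc, mul_assoc]
    _ = q * a := by rw [hp.mul_mul_self, hq.isSelfAdjoint_pinv_mul.star_eq]

theorem unique (hp : IsMoorePenroseInverse a p) (hq : IsMoorePenroseInverse a q) : p = q :=
  calc p = p * (a * p) := by rw [← mul_assoc, hp.mul_mul_pinv]
    _ = q * a * q := by rw [hp.self_mul_eq hq, ← mul_assoc, hp.mul_self_eq hq]
    _ = q := hq.mul_mul_pinv

theorem star (h : IsMoorePenroseInverse a p) : IsMoorePenroseInverse (star a) (star p) where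
  mul_mul_self := by rw [← star_mul, ← star_mul, ← mul_assoc, h.mul_mul_self]
  mul_mul_pinv := by rw [← star_mul, ← star_mul, ← mul_assoc, h.mul_mul_pinv]
  isSelfAdjoint_mul_pinv := by
    rw [← star_mul]; exact IsSelfAdjoint.star_iff.mpr h.isSelfAdjoint_pinv_mul
  isSelfAdjoint_pinv_mul := by
    rw [← star_mul]; exact IsSelfAdjoint.star_iff.mpr h.isSelfAdjoint_mul_pinv

theorem isSelfAdjoint (h : IsMoorePenroseInverse a p) (ha : IsSelfAdjoint a) :
    IsSelfAdjoint p := by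
  have hstar := h.star
  rw [ha.star_eq] at hstar
  exact hstar.unique h

theorem commute (h : IsMoorePenroseInverse a p) (ha : IsSelfAdjoint a) : Commute a p := by
  have hap := h.isSelfAdjoint_mul_pinv.star_eq
  rwa [star_mul, ha.star_eq, (h.isSelfAdjoint ha).star_eq, eq_comm] at hap

end IsMoorePenroseInverse

theorem ContinuousLinearMap.isPositive_of_forall_inner_nonneg {E : Type*} [NormedAddCommGroup E]
    [InnerProductSpace ℂ E] {T : E →L[ℂ] E} (hT : ∀ x, 0 ≤ ⟪T x, x⟫) : T.IsPositive :=
  (isPositive_iff_complex T).mpr fun x =>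
    ⟨(Complex.eq_re_of_ofReal_le (by exact_mod_cast hT x)).symm,
      (Complex.nonneg_iff.mp (hT x)).1⟩

theorem sum_inner_smul_eq_adjoint_apply {ι E F : Type*} [Fintype ι] [NormedAddCommGroup E]
    [InnerProductSpace ℂ E] [CompleteSpace E] [NormedAddCommGroup F] [InnerProductSpace ℂ F]
    [CompleteSpace F] {f : ι → E} {T : E →L[ℂ] F}
    (hT : ∀ x, ∑ i, ‖⟪f i, x⟫‖ ^ 2 = ‖T x‖ ^ 2) (x : E) :
    ∑ i, ⟪f i, x⟫ • f i = adjoint T (T x) := by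
  let S : E →ₗ[ℂ] E := ∑ i, (innerₛₗ ℂ (f i)).smulRight (f i)
  have hS : ∀ y, S y = ∑ i, ⟪f i, y⟫ • f i := by simp [S]
  suffices S = (adjoint T ∘L T : E →L[ℂ] E) by simpa [hS] using LinearMap.congr_fun this x
  refine (ext_inner_map _ _).mp fun y => ?_
  calc ⟪S y, y⟫ = ((∑ i, ‖⟪f i, y⟫‖ ^ 2 : ℝ) : ℂ) := by
        rw [hS, sum_inner]
        push_cast
        simp only [inner_smul_left, Complex.conj_mul']
    _ = ⟪T y, T y⟫ := by rw [hT, inner_self_eq_norm_sq_to_K]; norm_cast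
    _ = ⟪(adjoint T ∘L T) y, y⟫ := by rw [comp_apply, adjoint_inner_left]

theorem sum_apply_eq_zero_of_sum_smul_eq_zero {R M ι : Type*} [CommRing R] [AddCommGroup M]
    [Module R M] [Module.Free R M] [Module.Finite R M] (s : Finset ι) (φ : ι → Module.Dual R M)
    (v : ι → M) (h : ∀ x, ∑ i ∈ s, φ i x • v i = 0) : ∑ i ∈ s, φ i (v i) = 0 := by
  have hzero : ∑ i ∈ s, (φ i).smulRight (v i) = 0 := LinearMap.ext fun x => by simpa using h x
  simpa using congrArg (LinearMap.trace R M) hzero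

theorem sum_filter_smul_eq_zero_of_disjoint_span {R M ι : Type*} [Ring R] [AddCommGroup M]
    [Module R M] [Fintype ι] {v : ι → M} {s : Set ι} [DecidablePred (· ∈ s)]
    (hs : Disjoint (Submodule.span R (v '' s)) (Submodule.span R (v '' sᶜ))) {c : ι → R}
    (h : ∑ i, c i • v i = 0) : ∑ i ∈ univ.filter (· ∈ s), c i • v i = 0 := by
  have mem_span {t : Set ι} [DecidablePred (· ∈ t)] :
      ∑ i ∈ univ.filter (· ∈ t), c i • v i ∈ Submodule.span R (v '' t) :=
    Submodule.sum_mem _ fun i hi => Submodule.smul_mem _ _ <|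
      Submodule.subset_span (Set.mem_image_of_mem v (mem_filter.mp hi).2)
  have hsplit := sum_filter_add_sum_filter_not univ (· ∈ s) fun i => c i • v i
  rw [h, add_eq_zero_iff_eq_neg] at hsplit
  refine Submodule.disjoint_def.mp hs _ mem_span ?_
  rw [hsplit]
  exact neg_mem (mem_span (t := sᶜ))

theorem norm_le_ciSup_norm_of_sum_eq_card_nsmul {ι E : Type*} [Finite ι]
    [NormedAddCommGroup E] [NormedSpace ℝ E] {z : ι → E} {s : Finset ι} (hs : s.Nonempty)
    {w : E} (h : ∑ i ∈ s, z i = #s • w) : ‖w‖ ≤ ⨆ i, ‖z i‖ := by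
  have hbdd : BddAbove (Set.range fun i => ‖z i‖) := (Set.finite_range _).bddAbove
  refine le_of_mul_le_mul_left ?_ (Nat.cast_pos.mpr hs.card_pos)
  calc (#s : ℝ) * ‖w‖ = ‖∑ i ∈ s, z i‖ := by rw [h, RCLike.norm_nsmul ℝ, nsmul_eq_mul]
    _ ≤ ∑ i ∈ s, ‖z i‖ := norm_sum_le _ _
    _ ≤ ∑ _i ∈ s, ⨆ i, ‖z i‖ := sum_le_sum fun i _ => le_ciSup hbdd i
    _ = #s * ⨆ i, ‖z i‖ := by rw [sum_const, nsmul_eq_mul]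

section PseudoInverse

variable {H : Type*} [NormedAddCommGroup H] [InnerProductSpace ℂ H] [CompleteSpace H]
  {K P : H →L[ℂ] H}

theorem IsMoorePenroseInverse.isPositive (hKP : IsMoorePenroseInverse K P) (hK : K.IsPositive) :
    P.IsPositive := by
  have hPKP := hK.conj_adjoint P
  rw [(hKP.isSelfAdjoint hK.isSelfAdjoint).adjoint_eq] at hPKP
  rw [← hKP.mul_mul_pinv, mul_assoc]
  exact hPKP

theorem IsMoorePenroseInverse.sum_inner_smul_eq {ι : Type*} [Fintype ι]
    (hKP : IsMoorePenroseInverse K P) (hK : IsSelfAdjoint K) {f : ι → H}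
    (hf : ∀ x, ∑ i, ⟪f i, x⟫ • f i = K (K x)) (x : H) :
    ∑ i, ⟪P (f i), x⟫ • f i = K x :=
  calc ∑ i, ⟪P (f i), x⟫ • f i = ∑ i, ⟪f i, P x⟫ • f i := by
        refine sum_congr rfl fun i _ => ?_
        rw [← adjoint_inner_right, (hKP.isSelfAdjoint hK).adjoint_eq]
    _ = (K * (K * P)) x := hf (P x)
    _ = K x := by rw [(hKP.commute hK).eq, ← mul_assoc, hKP.mul_mul_self]

end PseudoInverse

theorem stmt16_general
    {H : Type*} [NormedAddCommGroup H] [InnerProductSpace ℂ H] [FiniteDimensional ℂ H]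
    {N : ℕ} (hN : 1 ≤ N)
    (K P : H →L[ℂ] H) (hK : ∀ f : H, 0 ≤ ⟪K f, f⟫)
    (hP1 : K ∘L P ∘L K = K) (hP2 : P ∘L K ∘L P = P)
    (hP3 : IsSelfAdjoint (K ∘L P)) (hP4 : IsSelfAdjoint (P ∘L K))
    (F : Fin N → H)
    (hParseval : ∀ f : H,
      ∑ i, ‖⟪F i, f⟫‖ ^ 2 = ‖ContinuousLinearMap.adjoint K f‖ ^ 2)
    (M : ℝ) (hM : M = ⨆ i, (⟪P (F i), F i⟫).re)
    (hW : Submodule.span ℂ (F '' {i | (⟪P (F i), F i⟫).re = M}) ⊓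
          Submodule.span ℂ (F '' {i | (⟪P (F i), F i⟫).re ≠ M}) = ⊥) :
    (∀ i, 0 ≤ ⟪P (F i), F i⟫) ∧
    (∀ G : Fin N → H, (∀ f : H, K f = ∑ i, ⟪G i, f⟫ • F i) →
      M ≤ ⨆ i, ‖⟪G i, F i⟫‖) := by
  classical
  have hKpos : K.IsPositive := isPositive_of_forall_inner_nonneg hK
  have hKP : IsMoorePenroseInverse K P :=
    ⟨(mul_assoc K P K).trans hP1, (mul_assoc P K P).trans hP2, hP3, hP4⟩
  have hPpos : P.IsPositive := hKP.isPositive hKpos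
  refine ⟨fun i => hPpos.inner_nonneg_left _, fun G hG => ?_⟩
  have hframe : ∀ f, ∑ i, ⟪F i, f⟫ • F i = K (K f) := by
    simpa [hKpos.isSelfAdjoint.adjoint_eq] using sum_inner_smul_eq_adjoint_apply hParseval
  set J := univ.filter fun i => (⟪P (F i), F i⟫).re = M
  have hJ : ∀ f, ∑ i ∈ J, ⟪G i - P (F i), f⟫ • F i = 0 := fun f =>
    sum_filter_smul_eq_zero_of_disjoint_span (disjoint_iff.mpr hW) <| by
      simp [sub_smul, sum_sub_distrib, ← hG, hKP.sum_inner_smul_eq hKpos.isSelfAdjoint hframe]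
  have hJM : ∀ i ∈ J, ⟪P (F i), F i⟫ = M := fun i hi => by
    have hreal : (0 : ℝ) ≤ ⟪P (F i), F i⟫ := by exact_mod_cast hPpos.inner_nonneg_left (F i)
    rw [Complex.eq_re_of_ofReal_le hreal, (mem_filter.mp hi).2]
  have hsum : ∑ i ∈ J, ⟪G i, F i⟫ = #J • (M : ℂ) := by
    have htrace := sum_apply_eq_zero_of_sum_smul_eq_zero J (fun i => innerₛₗ ℂ (G i - P (F i))) F hJ
    simp only [innerₛₗ_apply_apply, inner_sub_left, sum_sub_distrib, sub_eq_zero] at htrace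
    rw [htrace, sum_congr rfl hJM, sum_const]
  have : Nonempty (Fin N) := ⟨⟨0, hN⟩⟩
  obtain ⟨j, hj⟩ := exists_eq_ciSup_of_finite (f := fun i => (⟪P (F i), F i⟫).re)
  have hjJ : j ∈ J := mem_filter.mpr ⟨mem_univ j, hj.trans hM.symm⟩
  have hM0 : 0 ≤ M := by simpa [hJM j hjJ] using hPpos.re_inner_nonneg_left (F j)
  calc M = ‖(M : ℂ)‖ := by rw [Complex.norm_real, Real.norm_of_nonneg hM0]
    _ ≤ ⨆ i, ‖⟪G i, F i⟫‖ := norm_le_ciSup_norm_of_sum_eq_card_nsmul ⟨j, hjJ⟩ hsum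

/-- Let `K` be positive semidefinite with Moore–Penrose pseudoinverse `P` and
`F` a Parseval `K`-frame.  Each `⟨f_i, P f_i⟩` is a nonnegative real; with
`M = max_i ⟨f_i, P f_i⟩`, `J₁` the set of maximizing indices, `W₁ = span{f_i : i ∈ J₁}`,
`W₂ = span{f_i : i ∉ J₁}`: if `W₁ ∩ W₂ = {0}` then every `K`-dual `G` of `F` satisfies
`max_i |⟨f_i, g_i⟩| ≥ M`.
(The paper's `⟨f, g⟩` is linear in the first slot, so `⟨f_i, P f_i⟩` is Mathlib's
`⟪P f_i, f_i⟫` and `⟨f_i, g_i⟩` is `⟪g_i, f_i⟫`.) -/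
theorem stmt16
    {H : Type*} [NormedAddCommGroup H] [InnerProductSpace ℂ H] [FiniteDimensional ℂ H]
    (hdim : 1 ≤ Module.finrank ℂ H)
    {N : ℕ} (hN : 1 ≤ N)
    (K P : H →L[ℂ] H) (hK : ∀ f : H, 0 ≤ ⟪K f, f⟫)
    (hP1 : K ∘L P ∘L K = K) (hP2 : P ∘L K ∘L P = P)
    (hP3 : IsSelfAdjoint (K ∘L P)) (hP4 : IsSelfAdjoint (P ∘L K))
    (F : Fin N → H)
    (hParseval : ∀ f : H,
      ∑ i, ‖⟪F i, f⟫‖ ^ 2 = ‖ContinuousLinearMap.adjoint K f‖ ^ 2)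
    (M : ℝ) (hM : M = ⨆ i, (⟪P (F i), F i⟫).re)
    (hW : Submodule.span ℂ (F '' {i | (⟪P (F i), F i⟫).re = M}) ⊓
          Submodule.span ℂ (F '' {i | (⟪P (F i), F i⟫).re ≠ M}) = ⊥) :
    (∀ i, 0 ≤ ⟪P (F i), F i⟫) ∧
    (∀ G : Fin N → H, (∀ f : H, K f = ∑ i, ⟪G i, f⟫ • F i) →
      M ≤ ⨆ i, ‖⟪G i, F i⟫‖) :=
  stmt16_general hN K P hK hP1 hP2 hP3 hP4 F hParseval M hM hW
end
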